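/- With the notation of the $n$-fold cover of $\mathrm{Sp}_{2r}$ with $4 \mid n$ (so $n = 2m$, $m$ even, $Y = \mathbb{Z}^r$, $Y_{Q,n} = m\mathbb{Z}^r$, $Y_{Q,n}^{sc}$ as above), the cover is persistent: for every $y \in Y$, the stabilizer of the image of $y$ in $Y/Y_{Q,n}^{sc}$ under the twisted Weyl action $w[y] = w(y - \rho^\vee) + \rho^\vee$ equals the stabilizer of the image of $y$ in $Y/Y_{Q,n}$. -/

import Mathlib

/-!
Write `w = (σ, ε)` and `x = y - ρ^∨`, whose coordinates lie in `1/2 + ℤ`, so that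
`w[y] - y = w x - x`. The lattice `Y_{Q,n}^{sc}` consists of the `v ∈ mℤ^r` with `∑ v ∈ 2mℤ`, and
`∑ (w x - x) = -2 ∑_{ε i} x (σ⁻¹ i)`; so it suffices that `∑_{ε i} x (σ⁻¹ i) ∈ mℤ` whenever
`w x ≡ x` modulo `mℤ^r`. In `G = ℚ / mℤ` no `x i` satisfies `x i = -x i`, since `2 x i` is an odd
integer and `m` is even. Choosing `ψ : G → G` with `ψ g - ψ (-g) = g` for all such `g`, the sum in
question is the telescoping sum `∑ i, (ψ (x (σ⁻¹ i)) - ψ (x i)) = 0`.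
-/

open scoped BigOperators

/-- Standard basis vector of `ℚ^r`. -/
def stdE (r : ℕ) (i : Fin r) : Fin r → ℚ := fun k => if k = i then 1 else 0

/-- Simple coroots of type `C_r` in `ℚ^r`: `α_i^∨ = e_i - e_{i+1}` (`i < r`),
`α_r^∨ = e_r`. -/
def simpleCorootC (r : ℕ) (i : Fin r) : Fin r → ℚ :=
  if h : (i : ℕ) + 1 < r then stdE r i - stdE r ⟨(i : ℕ) + 1, h⟩ else stdE r i

/-- The Weyl group of type `C_r` consists of all signed permutations; the pair
`(σ, ε)` acts on `ℚ^r` by permuting the coordinates by `σ` and changing the signs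
indicated by `ε`. -/
def signedPerm (r : ℕ) (σ : Equiv.Perm (Fin r)) (ε : Fin r → Bool)
    (y : Fin r → ℚ) : Fin r → ℚ :=
  fun i => (if ε i then (-1 : ℚ) else 1) * y (σ.symm i)

/-- `ρ^∨`, the half-sum of the positive coroots of `C_r`. -/
def rhoCheckC (r : ℕ) : Fin r → ℚ := fun i => (r : ℚ) - (i : ℕ) - 1/2

/-- The twisted Weyl action `w[y] = w(y - ρ^∨) + ρ^∨`. -/
def twistedC (r : ℕ) (σ : Equiv.Perm (Fin r)) (ε : Fin r → Bool)
    (y : Fin r → ℚ) : Fin r → ℚ :=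
  signedPerm r σ ε (y - rhoCheckC r) + rhoCheckC r

/-- `Y_{Q,n} = mℤ^r` (`n = 2m`), realized inside `ℚ^r`. -/
def YQnC (r m : ℕ) : Set (Fin r → ℚ) := {v | ∀ i, ∃ c : ℤ, v i = (m : ℚ) * c}

/-- `Y_{Q,n}^{sc}` (`n = 2m`), the sublattice spanned by `m·α_i^∨` for `i < r`
and `n·α_r^∨ = 2m·α_r^∨`, realized inside `ℚ^r`. -/
def YQnscC (r m : ℕ) : AddSubgroup (Fin r → ℚ) :=
  AddSubgroup.closure
    {v | ∃ i : Fin r,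
      v = (if (i : ℕ) + 1 < r then (m : ℚ) else 2 * m) • simpleCorootC r i}

open Finset

theorem exists_sub_neg_eq_self (G : Type*) [AddCommGroup G] :
    ∃ ψ : G → G, ∀ x, x ≠ -x → ψ x - ψ (-x) = x := by
  -- any linear order on `G` selects one element `x > -x` from each pair `{x, -x}`
  let : LinearOrder G := IsWellOrder.linearOrder WellOrderingRel
  refine ⟨fun x => if -x < x then x else 0, fun x hx => ?_⟩
  rcases hx.lt_or_gt with h | h
  · simp [h.not_gt, h]
  · simp [h, h.not_gt]

theorem sum_filter_eq_zero_of_eq_ite_neg {α G : Type*} [Fintype α] [AddCommGroup G]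
    (σ : Equiv.Perm α) (ε : α → Bool) (b : α → G) (hb : ∀ i, b i ≠ -b i)
    (hσε : ∀ i, b i = if ε i then -b (σ.symm i) else b (σ.symm i)) :
    ∑ i with ε i, b (σ.symm i) = 0 := by
  obtain ⟨ψ, hψ⟩ := exists_sub_neg_eq_self G
  calc ∑ i with ε i, b (σ.symm i)
      = ∑ i, (ψ (b (σ.symm i)) - ψ (b i)) := by
        rw [sum_filter]
        refine sum_congr rfl fun i _ => ?_
        rw [hσε i]
        split_ifs
        · exact (hψ _ (hb _)).symm
        · exact (sub_self _).symm
    _ = 0 := by rw [sum_sub_distrib, Equiv.sum_comp σ.symm fun j => ψ (b j), sub_self]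

theorem sum_filter_mem_of_ite_neg_sub_mem {α G : Type*} [Fintype α] [AddCommGroup G]
    (H : AddSubgroup G) (σ : Equiv.Perm α) (ε : α → Bool) (x : α → G)
    (hx : ∀ i, x i + x i ∉ H)
    (hσε : ∀ i, (if ε i then -x (σ.symm i) else x (σ.symm i)) - x i ∈ H) :
    ∑ i with ε i, x (σ.symm i) ∈ H := by
  rw [← QuotientAddGroup.eq_zero_iff, QuotientAddGroup.mk_sum]
  refine sum_filter_eq_zero_of_eq_ite_neg σ ε (fun i => (x i : G ⧸ H)) (fun i h => hx i ?_)
    (fun i => ?_)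
  · rwa [← QuotientAddGroup.mk_neg, QuotientAddGroup.eq, ← neg_add, neg_mem_iff] at h
  · calc (x i : G ⧸ H) = ((if ε i then -x (σ.symm i) else x (σ.symm i) : G) : G ⧸ H) :=
        QuotientAddGroup.eq_iff_sub_mem.2 (H.sub_mem_comm_iff.1 (hσε i))
      _ = _ := by split_ifs <;> rfl

theorem stdE_eq_single (r : ℕ) (i : Fin r) : stdE r i = Pi.single i 1 := by
  funext k
  simp [stdE, Pi.single_apply]

theorem mem_YQnC_iff {r m : ℕ} {v : Fin r → ℚ} :
    v ∈ YQnC r m ↔ ∀ i, v i ∈ AddSubgroup.zmultiples (m : ℚ) := by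
  simp [YQnC, AddSubgroup.mem_zmultiples_iff, eq_comm, mul_comm]

theorem coe_YQnscC_subset_YQnC (r m : ℕ) : (YQnscC r m : Set (Fin r → ℚ)) ⊆ YQnC r m := by
  let L : AddSubgroup (Fin r → ℚ) := AddSubgroup.pi Set.univ fun _ => .zmultiples (m : ℚ)
  have hL : (L : Set (Fin r → ℚ)) = YQnC r m := by
    ext v
    simp [L, AddSubgroup.mem_pi, mem_YQnC_iff]
  suffices YQnscC r m ≤ L from hL ▸ this
  rw [YQnscC, AddSubgroup.closure_le]
  have hsingle : ∀ i, (m : ℚ) • stdE r i ∈ L := fun i k _ => by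
    by_cases h : k = i <;> simp [stdE, h, AddSubgroup.mem_zmultiples]
  rintro _ ⟨i, rfl⟩
  unfold simpleCorootC
  split_ifs
  · rw [smul_sub]
    exact sub_mem (hsingle _) (hsingle _)
  · rw [mul_smul, two_smul]
    exact add_mem (hsingle i) (hsingle i)

theorem simpleCorootC_castSucc (n : ℕ) (j : Fin n) :
    simpleCorootC (n + 1) j.castSucc = Pi.single j.castSucc 1 - Pi.single j.succ 1 := by
  simp [simpleCorootC, stdE_eq_single, Fin.succ]

theorem simpleCorootC_last (n : ℕ) :
    simpleCorootC (n + 1) (Fin.last n) = Pi.single (Fin.last n) 1 := by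
  simp [simpleCorootC, stdE_eq_single]

theorem smul_sub_single_last_mem_YQnscC (n m : ℕ) (i : Fin (n + 1)) :
    (m : ℚ) • (Pi.single i 1 - Pi.single (Fin.last n) 1) ∈ YQnscC (n + 1) m := by
  induction i using Fin.reverseInduction with
  | last => simp
  | cast j ih =>
    have hgen : (m : ℚ) • simpleCorootC (n + 1) j.castSucc ∈ YQnscC (n + 1) m :=
      AddSubgroup.subset_closure ⟨j.castSucc, by simp⟩
    rw [simpleCorootC_castSucc] at hgen
    convert add_mem hgen ih using 1
    rw [← smul_add, sub_add_sub_cancel]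

theorem two_mul_smul_single_last_mem_YQnscC (n m : ℕ) :
    (2 * m : ℚ) • Pi.single (Fin.last n) 1 ∈ YQnscC (n + 1) m := by
  rw [← simpleCorootC_last]
  exact AddSubgroup.subset_closure ⟨Fin.last n, by simp⟩

theorem mem_YQnscC_of_sum_mem {r m : ℕ} {v : Fin r → ℚ} (hv : v ∈ YQnC r m)
    (hsum : ∑ i, v i ∈ AddSubgroup.zmultiples (2 * m : ℚ)) : v ∈ YQnscC r m := by
  rcases r with _ | n
  · exact Subsingleton.elim v 0 ▸ zero_mem _
  rw [mem_YQnC_iff] at hv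
  choose c hc using fun i => AddSubgroup.mem_zmultiples_iff.1 (hv i)
  obtain ⟨d, hd⟩ := AddSubgroup.mem_zmultiples_iff.1 hsum
  have hdecomp : v = ∑ i, c i • ((m : ℚ) • (Pi.single i 1 - Pi.single (Fin.last n) 1))
      + d • ((2 * m : ℚ) • Pi.single (Fin.last n) 1) := by
    simp only [← smul_assoc, hc, hd, smul_sub, sum_sub_distrib, ← sum_smul]
    rw [sub_add_cancel, ← pi_eq_sum_univ']
  rw [hdecomp]
  exact add_mem (sum_mem fun i _ => zsmul_mem (smul_sub_single_last_mem_YQnscC n m i) _)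
    (zsmul_mem (two_mul_smul_single_last_mem_YQnscC n m) _)

theorem twistedC_sub_self (r : ℕ) (σ : Equiv.Perm (Fin r)) (ε : Fin r → Bool) (y : Fin r → ℚ) :
    twistedC r σ ε y - y = signedPerm r σ ε (y - rhoCheckC r) - (y - rhoCheckC r) := by
  rw [twistedC]
  abel

theorem signedPerm_apply (r : ℕ) (σ : Equiv.Perm (Fin r)) (ε : Fin r → Bool) (x : Fin r → ℚ)
    (i : Fin r) : signedPerm r σ ε x i = if ε i then -x (σ.symm i) else x (σ.symm i) := by
  rw [signedPerm]
  split_ifs <;> simp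

theorem sum_signedPerm_sub_self (r : ℕ) (σ : Equiv.Perm (Fin r)) (ε : Fin r → Bool)
    (x : Fin r → ℚ) : ∑ i, (signedPerm r σ ε x - x) i = -2 * ∑ i with ε i, x (σ.symm i) := by
  have hterm : ∀ i, (signedPerm r σ ε x - x) i
      = x (σ.symm i) - x i - 2 * if ε i then x (σ.symm i) else 0 := by
    intro i
    rw [Pi.sub_apply, signedPerm_apply]
    split_ifs <;> ring
  simp only [hterm, sum_sub_distrib, ← mul_sum, ← sum_filter, Equiv.sum_comp σ.symm x]
  ring

theorem intCast_notMem_zmultiples_of_odd {m : ℕ} (hm : Even m) {k : ℤ} (hk : Odd k) :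
    (k : ℚ) ∉ AddSubgroup.zmultiples (m : ℚ) := by
  rintro ⟨j, hj⟩
  have hjk : j * m = k := by
    simp only [zsmul_eq_mul] at hj
    exact_mod_cast hj
  exact Int.not_even_iff_odd.2 hk (hjk ▸ (hm.natCast (α := ℤ)).mul_left j)

theorem sum_twistedC_sub_self_mem_zmultiples {r m : ℕ} (hm : Even m) {y : Fin r → ℚ}
    (hy : ∀ i, ∃ z : ℤ, y i = z) {σ : Equiv.Perm (Fin r)} {ε : Fin r → Bool}
    (h : twistedC r σ ε y - y ∈ YQnC r m) :
    ∑ i, (twistedC r σ ε y - y) i ∈ AddSubgroup.zmultiples (2 * m : ℚ) := by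
  rw [twistedC_sub_self, mem_YQnC_iff] at h
  rw [twistedC_sub_self, sum_signedPerm_sub_self]
  have hodd : ∀ i, (y - rhoCheckC r) i + (y - rhoCheckC r) i ∉ AddSubgroup.zmultiples (m : ℚ) := by
    intro i
    obtain ⟨z, hz⟩ := hy i
    have : (y - rhoCheckC r) i + (y - rhoCheckC r) i = ((2 * (z - r + i) + 1 : ℤ) : ℚ) := by
      simp only [Pi.sub_apply, hz, rhoCheckC]
      push_cast
      ring
    exact this ▸ intCast_notMem_zmultiples_of_odd hm (odd_two_mul_add_one _)
  obtain ⟨k, hk⟩ := sum_filter_mem_of_ite_neg_sub_mem _ σ ε _ hodd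
    fun i => by simpa only [Pi.sub_apply, signedPerm_apply] using h i
  exact ⟨-k, by simp only [← hk, zsmul_eq_mul]; push_cast; ring⟩

theorem statement5_general (r m : ℕ) (hmeven : Even m) :
    ∀ y : Fin r → ℚ, (∀ i, ∃ z : ℤ, y i = (z : ℚ)) →
      {p : Equiv.Perm (Fin r) × (Fin r → Bool) |
          twistedC r p.1 p.2 y - y ∈ (YQnscC r m : Set (Fin r → ℚ))}
        = {p : Equiv.Perm (Fin r) × (Fin r → Bool) |
            twistedC r p.1 p.2 y - y ∈ YQnC r m} := by
  intro y hy
  ext ⟨σ, ε⟩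
  exact ⟨fun h => coe_YQnscC_subset_YQnC r m h,
    fun h => mem_YQnscC_of_sum_mem h (sum_twistedC_sub_self_mem_zmultiples hmeven hy h)⟩

/-- For the `n`-fold cover of `Sp_{2r}` with `4 ∣ n` (so `n = 2m`
with `m` even), the cover is persistent: for every `y` in the cocharacter lattice
`Y = ℤ^r`, the stabilizer of `y` modulo `Y_{Q,n}^{sc}` under the twisted Weyl action
`w[y] = w(y-ρ^∨)+ρ^∨` equals its stabilizer modulo `Y_{Q,n}`. -/
theorem statement5 (r m : ℕ) (hr : 0 < r) (hm : 0 < m) (hmeven : Even m) :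
    ∀ y : Fin r → ℚ, (∀ i, ∃ z : ℤ, y i = (z : ℚ)) →
      {p : Equiv.Perm (Fin r) × (Fin r → Bool) |
          twistedC r p.1 p.2 y - y ∈ (YQnscC r m : Set (Fin r → ℚ))}
        = {p : Equiv.Perm (Fin r) × (Fin r → Bool) |
            twistedC r p.1 p.2 y - y ∈ YQnC r m} :=
  statement5_general r m hmeven
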